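/- Let w₁ and w₂ be classical solutions of the homogeneous heat equation with homogeneous Dirichlet boundary conditions on a nonempty bounded open set Ω ⊂ ℝ^d over [0,T] with the same diffusion coefficient a > 0, and suppose w₁(0,x) = w₂(0,x) for every x in the closure of Ω. Then w₁(t,x) = w₂(t,x) for every t ∈ [0,T] and every x in the closure of Ω. -/

import Mathlib

open Set

/-- The Laplacian of a function `u : ℝ^d → ℝ`, defined as the sum of the second
directional derivatives along the standard basis directions. -/
noncomputable def heatLaplacian {d : ℕ} (u : EuclideanSpace ℝ (Fin d) → ℝ)
    (x : EuclideanSpace ℝ (Fin d)) : ℝ :=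
  ∑ i : Fin d,
    fderiv ℝ (fun y => fderiv ℝ u y (EuclideanSpace.single i (1 : ℝ))) x
      (EuclideanSpace.single i (1 : ℝ))

/-- `w` is a classical solution of the homogeneous heat equation `∂ₜ w = a Δ w` on `Ω`
over the time interval `[0, T]`, with homogeneous Dirichlet boundary conditions. -/
structure IsClassicalHeatSolution {d : ℕ} (Ω : Set (EuclideanSpace ℝ (Fin d))) (a T : ℝ)
    (w : ℝ → EuclideanSpace ℝ (Fin d) → ℝ) : Prop where
  continuousOn :
    ContinuousOn (fun p : ℝ × EuclideanSpace ℝ (Fin d) => w p.1 p.2)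
      (Icc 0 T ×ˢ closure Ω)
  space_smooth : ∀ t ∈ Ioc 0 T, ∀ x ∈ Ω, ∃ U ∈ nhds x, ContDiffOn ℝ 2 (w t) U
  heat_eq : ∀ t ∈ Ioc 0 T, ∀ x ∈ Ω,
    HasDerivAt (fun τ => w τ x) (a * heatLaplacian (w t) x) t
  boundary : ∀ t ∈ Icc 0 T, ∀ x ∈ frontier Ω, w t x = 0


/-!
The difference `u` of two solutions vanishes at `t = 0` and on `∂Ω`, so it suffices to show
`u ≤ 0` (weak maximum principle) and apply this to `±u`. For `ε > 0` the function `u - ε t`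
attains its maximum on the compact set `[0, T] × cl(Ω)`. At a maximum with `t > 0` and `x ∈ Ω`
we would have `∂ₜ u - ε ≥ 0` (a maximum in time from the left) and `Δu ≤ 0` (an interior
spatial maximum), contradicting `∂ₜ u = a Δu`. So the maximum lies where `u = 0`, whence
`u ≤ ε t`; now let `ε → 0`.
-/

open Filter Topology

section SecondDerivatives

variable {E : Type*} [NormedAddCommGroup E] [NormedSpace ℝ E] {u w : E → ℝ} {x : E}

theorem IsLocalMax.deriv_deriv_nonpos {f : ℝ → ℝ} {x₀ : ℝ} (hmax : IsLocalMax f x₀)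
    (hf : ContinuousAt f x₀) : deriv (deriv f) x₀ ≤ 0 := by
  by_contra! hpos
  -- By the second-derivative test `x₀` is also a local minimum, so `f` is locally constant.
  have hmin : IsLocalMin f x₀ := isLocalMin_of_deriv_deriv_pos hpos hmax.deriv_eq_zero hf
  have hconst : f =ᶠ[𝓝 x₀] fun _ => f x₀ := by
    filter_upwards [hmax, hmin] with y hle hge using le_antisymm hle hge
  simp [hconst.deriv.deriv_eq] at hpos

theorem ContDiffAt.differentiableAt_fderiv_apply (hu : ContDiffAt ℝ 2 u x)
    (v : E) : DifferentiableAt ℝ (fun y => fderiv ℝ u y v) x :=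
  ((hu.fderiv_right (m := 1) (by norm_num)).clm_apply contDiffAt_const).differentiableAt
    (by norm_num)

theorem ContDiffAt.eventually_differentiableAt (hu : ContDiffAt ℝ 2 u x) :
    ∀ᶠ y in 𝓝 x, DifferentiableAt ℝ u y := by
  filter_upwards [hu.eventually (by norm_num)] with y hy
  exact hy.differentiableAt (by norm_num)

theorem ContDiffAt.deriv_deriv_comp_line (hu : ContDiffAt ℝ 2 u x) (v : E) :
    deriv (deriv fun s : ℝ => u (x + s • v)) 0
      = fderiv ℝ (fun y => fderiv ℝ u y v) x v := by
  have hline : ∀ s : ℝ, HasDerivAt (fun s : ℝ => x + s • v) v s := fun s => by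
    simpa using ((hasDerivAt_id s).smul_const v).const_add x
  have hline0 : Tendsto (fun s : ℝ => x + s • v) (𝓝 0) (𝓝 x) := by
    simpa using (hline 0).continuousAt.tendsto
  have hdiff : ∀ᶠ s : ℝ in 𝓝 0, DifferentiableAt ℝ u (x + s • v) :=
    hline0.eventually hu.eventually_differentiableAt
  have hfirst : deriv (fun s : ℝ => u (x + s • v)) =ᶠ[𝓝 0]
      fun s => fderiv ℝ u (x + s • v) v := by
    filter_upwards [hdiff] with s hs
    exact (hs.hasFDerivAt.comp_hasDerivAt s (hline s)).deriv
  rw [hfirst.deriv_eq]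
  exact ((hu.differentiableAt_fderiv_apply v).hasFDerivAt.comp_hasDerivAt_of_eq 0 (hline 0)
    (by simp)).deriv

theorem IsLocalMax.fderiv_fderiv_apply_nonpos (hmax : IsLocalMax u x)
    (hu : ContDiffAt ℝ 2 u x) (v : E) : fderiv ℝ (fun y => fderiv ℝ u y v) x v ≤ 0 := by
  rw [← hu.deriv_deriv_comp_line v]
  have hline : ContinuousAt (fun s : ℝ => x + s • v) 0 := by fun_prop
  apply IsLocalMax.deriv_deriv_nonpos
  · exact IsLocalMax.comp_continuous (g := fun s : ℝ => x + s • v) (by simpa using hmax) hline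
  · exact ContinuousAt.comp (g := u) (by simpa using hu.continuousAt) hline

theorem ContDiffAt.fderiv_fderiv_apply_sub (hu : ContDiffAt ℝ 2 u x)
    (hw : ContDiffAt ℝ 2 w x) (v : E) :
    fderiv ℝ (fun y => fderiv ℝ (fun z => u z - w z) y v) x v
      = fderiv ℝ (fun y => fderiv ℝ u y v) x v
        - fderiv ℝ (fun y => fderiv ℝ w y v) x v := by
  have hfirst : (fun y => fderiv ℝ (fun z => u z - w z) y v)
      =ᶠ[𝓝 x] fun y => fderiv ℝ u y v - fderiv ℝ w y v := by
    filter_upwards [hu.eventually_differentiableAt, hw.eventually_differentiableAt]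
      with y huy hwy
    rw [fderiv_fun_sub huy hwy]
    rfl
  rw [hfirst.fderiv_eq,
    fderiv_fun_sub (hu.differentiableAt_fderiv_apply v) (hw.differentiableAt_fderiv_apply v)]
  rfl

end SecondDerivatives

section Laplacian

variable {d : ℕ} {u w : EuclideanSpace ℝ (Fin d) → ℝ} {x : EuclideanSpace ℝ (Fin d)}

theorem heatLaplacian_sub (hu : ContDiffAt ℝ 2 u x) (hw : ContDiffAt ℝ 2 w x) :
    heatLaplacian (fun y => u y - w y) x = heatLaplacian u x - heatLaplacian w x := by
  simp only [heatLaplacian, ← Finset.sum_sub_distrib, hu.fderiv_fderiv_apply_sub hw]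

theorem IsLocalMax.heatLaplacian_nonpos (hmax : IsLocalMax u x) (hu : ContDiffAt ℝ 2 u x) :
    heatLaplacian u x ≤ 0 :=
  Finset.sum_nonpos fun _ _ => hmax.fderiv_fderiv_apply_nonpos hu _

end Laplacian

theorem IsMaxOn.hasDerivAt_nonneg_of_mem_Ioc {g : ℝ → ℝ} {g' a b t₀ : ℝ}
    (hmax : IsMaxOn g (Icc a b) t₀) (hg : HasDerivAt g g' t₀) (ht₀ : t₀ ∈ Ioc a b) :
    0 ≤ g' := by
  have hlocal : IsLocalMaxOn g (Iic t₀) t₀ :=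
    mem_of_superset (Icc_mem_nhdsLE ht₀.1) fun τ hτ => hmax ⟨hτ.1, hτ.2.trans ht₀.2⟩
  have hleft : (-1 : ℝ) ∈ posTangentConeAt (Iic t₀) t₀ :=
    mem_posTangentConeAt_of_segment_subset ((convex_Iic t₀).segment_subset self_mem_Iic (by simp))
  simpa using hlocal.hasFDerivWithinAt_nonpos hg.hasFDerivAt.hasFDerivWithinAt hleft

namespace IsClassicalHeatSolution

variable {d : ℕ} {Ω : Set (EuclideanSpace ℝ (Fin d))} {a T : ℝ}
  {u w₁ w₂ : ℝ → EuclideanSpace ℝ (Fin d) → ℝ}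

theorem contDiffAt (hu : IsClassicalHeatSolution Ω a T u) {t : ℝ} (ht : t ∈ Ioc 0 T)
    {x : EuclideanSpace ℝ (Fin d)} (hx : x ∈ Ω) : ContDiffAt ℝ 2 (u t) x :=
  let ⟨_, hU, hsmooth⟩ := hu.space_smooth t ht x hx
  hsmooth.contDiffAt hU

protected theorem sub (hw₁ : IsClassicalHeatSolution Ω a T w₁)
    (hw₂ : IsClassicalHeatSolution Ω a T w₂) :
    IsClassicalHeatSolution Ω a T (fun t x => w₁ t x - w₂ t x) where
  continuousOn := hw₁.continuousOn.sub hw₂.continuousOn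
  space_smooth t ht x hx :=
    ((hw₁.contDiffAt ht hx).sub (hw₂.contDiffAt ht hx)).contDiffOn le_rfl (by norm_num)
  heat_eq t ht x hx := by
    rw [heatLaplacian_sub (hw₁.contDiffAt ht hx) (hw₂.contDiffAt ht hx), mul_sub]
    exact (hw₁.heat_eq t ht x hx).sub (hw₂.heat_eq t ht x hx)
  boundary t ht x hx := by
    rw [hw₁.boundary t ht x hx, hw₂.boundary t ht x hx, sub_self]

theorem not_isMaxOn_sub_mul_of_mem (hu : IsClassicalHeatSolution Ω a T u) (hΩ : IsOpen Ω)
    (ha : 0 ≤ a) {ε : ℝ} (hε : 0 < ε) {t₀ : ℝ} (ht₀ : t₀ ∈ Ioc 0 T)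
    {x₀ : EuclideanSpace ℝ (Fin d)} (hx₀ : x₀ ∈ Ω) :
    ¬ IsMaxOn (fun p => u p.1 p.2 - ε * p.1) (Icc 0 T ×ˢ closure Ω) (t₀, x₀) := by
  intro hmax
  have htime : 0 ≤ a * heatLaplacian (u t₀) x₀ - ε := by
    refine IsMaxOn.hasDerivAt_nonneg_of_mem_Ioc (g := fun τ => u τ x₀ - ε * τ)
      (fun τ hτ => hmax (show (τ, x₀) ∈ _ from ⟨hτ, subset_closure hx₀⟩)) ?_ ht₀
    exact (hu.heat_eq t₀ ht₀ x₀ hx₀).sub (by simpa using (hasDerivAt_id t₀).const_mul ε)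
  have hspace : IsLocalMax (u t₀) x₀ := by
    filter_upwards [hΩ.mem_nhds hx₀] with y hy
    simpa using hmax (show (t₀, y) ∈ _ from ⟨Ioc_subset_Icc_self ht₀, subset_closure hy⟩)
  have hlaplacian := mul_nonpos_of_nonneg_of_nonpos ha
    (hspace.heatLaplacian_nonpos (hu.contDiffAt ht₀ hx₀))
  linarith

theorem sub_mul_nonpos_of_initial_eq_zero (hu : IsClassicalHeatSolution Ω a T u)
    (hΩ : IsOpen Ω) (hΩbdd : Bornology.IsBounded Ω) (ha : 0 ≤ a)
    (h0 : ∀ x ∈ closure Ω, u 0 x = 0) {ε : ℝ} (hε : 0 < ε) {t : ℝ} (ht : t ∈ Icc 0 T)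
    {x : EuclideanSpace ℝ (Fin d)} (hx : x ∈ closure Ω) : u t x - ε * t ≤ 0 := by
  obtain ⟨⟨t₀, x₀⟩, ⟨ht₀, hx₀⟩, hmax⟩ :=
    (isCompact_Icc.prod hΩbdd.isCompact_closure).exists_isMaxOn ⟨(t, x), ht, hx⟩
      (f := fun p => u p.1 p.2 - ε * p.1)
      (hu.continuousOn.sub (continuous_const.mul continuous_fst).continuousOn)
  have hzero : u t₀ x₀ = 0 := by
    by_cases hx₀Ω : x₀ ∈ Ω
    · rcases ht₀.1.eq_or_lt with rfl | ht₀pos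
      · exact h0 x₀ hx₀
      · exact absurd hmax
          (hu.not_isMaxOn_sub_mul_of_mem hΩ ha hε ⟨ht₀pos, ht₀.2⟩ hx₀Ω)
    · exact hu.boundary t₀ ht₀ x₀ (hΩ.frontier_eq ▸ ⟨hx₀, hx₀Ω⟩)
  calc u t x - ε * t ≤ u t₀ x₀ - ε * t₀ := hmax (show (t, x) ∈ _ from ⟨ht, hx⟩)
    _ = -(ε * t₀) := by rw [hzero, zero_sub]
    _ ≤ 0 := neg_nonpos.2 (mul_nonneg hε.le ht₀.1)

theorem nonpos_of_initial_eq_zero (hu : IsClassicalHeatSolution Ω a T u)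
    (hΩ : IsOpen Ω) (hΩbdd : Bornology.IsBounded Ω) (ha : 0 ≤ a)
    (h0 : ∀ x ∈ closure Ω, u 0 x = 0) {t : ℝ} (ht : t ∈ Icc 0 T)
    {x : EuclideanSpace ℝ (Fin d)} (hx : x ∈ closure Ω) : u t x ≤ 0 := by
  have hlim : Tendsto (fun ε : ℝ => ε * t) (𝓝[>] 0) (𝓝 0) :=
    tendsto_nhdsWithin_of_tendsto_nhds ((continuous_mul_const t).tendsto' 0 0 (zero_mul t))
  refine ge_of_tendsto hlim (eventually_nhdsWithin_of_forall fun ε hε => ?_)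
  exact sub_nonpos.1 (hu.sub_mul_nonpos_of_initial_eq_zero hΩ hΩbdd ha h0 hε ht hx)

end IsClassicalHeatSolution

theorem heat_uniqueness_general {d : ℕ}
    (Ω : Set (EuclideanSpace ℝ (Fin d))) (hΩopen : IsOpen Ω)
    (hΩbdd : Bornology.IsBounded Ω)
    (a T : ℝ) (ha : 0 < a)
    (w₁ w₂ : ℝ → EuclideanSpace ℝ (Fin d) → ℝ)
    (hw₁ : IsClassicalHeatSolution Ω a T w₁)
    (hw₂ : IsClassicalHeatSolution Ω a T w₂)
    (h0 : ∀ x ∈ closure Ω, w₁ 0 x = w₂ 0 x) :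
    ∀ t ∈ Icc 0 T, ∀ x ∈ closure Ω, w₁ t x = w₂ t x := by
  intro t ht x hx
  have hle := (hw₁.sub hw₂).nonpos_of_initial_eq_zero hΩopen hΩbdd ha.le
    (fun y hy => sub_eq_zero.2 (h0 y hy)) ht hx
  have hge := (hw₂.sub hw₁).nonpos_of_initial_eq_zero hΩopen hΩbdd ha.le
    (fun y hy => sub_eq_zero.2 (h0 y hy).symm) ht hx
  exact le_antisymm (sub_nonpos.1 hle) (sub_nonpos.1 hge)

/-- Uniqueness of classical solutions of the homogeneous heat equation with homogeneous
Dirichlet boundary conditions: two solutions with the same initial data coincide. -/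
theorem heat_uniqueness {d : ℕ} (hd : 0 < d)
    (Ω : Set (EuclideanSpace ℝ (Fin d))) (hΩopen : IsOpen Ω)
    (hΩbdd : Bornology.IsBounded Ω) (hΩne : Ω.Nonempty)
    (a T : ℝ) (ha : 0 < a) (hT : 0 < T)
    (w₁ w₂ : ℝ → EuclideanSpace ℝ (Fin d) → ℝ)
    (hw₁ : IsClassicalHeatSolution Ω a T w₁)
    (hw₂ : IsClassicalHeatSolution Ω a T w₂)
    (h0 : ∀ x ∈ closure Ω, w₁ 0 x = w₂ 0 x) :
    ∀ t ∈ Icc 0 T, ∀ x ∈ closure Ω, w₁ t x = w₂ t x :=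
  heat_uniqueness_general Ω hΩopen hΩbdd a T ha w₁ w₂ hw₁ hw₂ h0
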